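/- arXiv:2109.06851 — 2 statements merged into one kernel-verified Lean document; each statement's English description precedes it below -/
import Mathlib

section
/- Let $J$ be an almost complex structure on an open set $\Omega \subset \mathbb{R}^{2n}$, let $v$ be a constant-coefficient vector field on $\Omega$, and let $f : \Omega \to \mathbb{R}$ be smooth. Then $\partial\bar\partial f(v - iJv, v + iJv) = (D^2 f)(v,v) + (D^2 f)(Jv, Jv) + (Df)\big(D_{Jv}J(v) - D_v J(Jv)\big)$, where $D^2 f$ is the Euclidean Hessian and $D_u J$ the directional derivative of the matrix of $J$. -/
noncomputable section

/-- Directional derivative (within `Ω`) of a complex-valued function along a complex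
vector field on `ℝᴺ`. -/
def cderivAlong (N : ℕ) (Ω : Set (Fin N → ℝ)) (g : (Fin N → ℝ) → ℂ)
    (X : (Fin N → ℝ) → Fin N → ℂ) (x : Fin N → ℝ) : ℂ :=
  ∑ j, X x j * fderivWithin ℝ g Ω x (Pi.single j 1)

/-- The complexified differential of a real function, applied to a complex tangent vector. -/
def cdf (N : ℕ) (Ω : Set (Fin N → ℝ)) (f : (Fin N → ℝ) → ℝ)
    (x : Fin N → ℝ) (X : Fin N → ℂ) : ℂ :=
  ∑ j, X j * (fderivWithin ℝ f Ω x (Pi.single j 1) : ℂ)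

/-- Lie bracket of two complex vector fields on `ℝᴺ`. -/
def cbracket (N : ℕ) (Ω : Set (Fin N → ℝ))
    (X Y : (Fin N → ℝ) → Fin N → ℂ) (x : Fin N → ℝ) : Fin N → ℂ :=
  fun j => cderivAlong N Ω (fun y => Y y j) X x - cderivAlong N Ω (fun y => X y j) Y x

/-- Complexified action of the almost complex structure (given as a matrix field). -/
def applyJc (N : ℕ) (J : (Fin N → ℝ) → Matrix (Fin N) (Fin N) ℝ)
    (x : Fin N → ℝ) (X : Fin N → ℂ) : Fin N → ℂ :=
  fun j => ∑ k, (J x j k : ℂ) * X k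

/-- Real action of the almost complex structure on a vector. -/
def applyJ (N : ℕ) (J : (Fin N → ℝ) → Matrix (Fin N) (Fin N) ℝ)
    (x : Fin N → ℝ) (v : Fin N → ℝ) : Fin N → ℝ :=
  fun j => ∑ k, J x j k * v k

/-- The `(1,0)` field `v - i J v` attached to a constant vector `v`. -/
def vField (N : ℕ) (J : (Fin N → ℝ) → Matrix (Fin N) (Fin N) ℝ)
    (v : Fin N → ℝ) : (Fin N → ℝ) → Fin N → ℂ :=
  fun x j => (v j : ℂ) - Complex.I * (applyJ N J x v j : ℂ)

/-- The `(0,1)` field `v + i J v` attached to a constant vector `v`. -/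
def wField (N : ℕ) (J : (Fin N → ℝ) → Matrix (Fin N) (Fin N) ℝ)
    (v : Fin N → ℝ) : (Fin N → ℝ) → Fin N → ℂ :=
  fun x j => (v j : ℂ) + Complex.I * (applyJ N J x v j : ℂ)

/-- `∂∂̄f(v - iJv, v + iJv)`, defined by the standard formula
`(d ∂̄f)(V, W̄) = V(W̄ f) - ∂̄f([V, W̄])`, where `∂̄f(Z) = df(π^{0,1} Z)` and
`π^{0,1} = (1/2)(1 + i Jᶜ)`. -/
def ddbar (N : ℕ) (Ω : Set (Fin N → ℝ)) (J : (Fin N → ℝ) → Matrix (Fin N) (Fin N) ℝ)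
    (f : (Fin N → ℝ) → ℝ) (v : Fin N → ℝ) (x : Fin N → ℝ) : ℂ :=
  cderivAlong N Ω (fun y => cdf N Ω f y (wField N J v y)) (vField N J v) x
    - cdf N Ω f x (fun j =>
        (1 / 2 : ℂ) * (cbracket N Ω (vField N J v) (wField N J v) x j
          + Complex.I * applyJc N J x (cbracket N Ω (vField N J v) (wField N J v) x) j))

open Finset

lemma clm_basis {N : ℕ} {F : Type*} [NormedAddCommGroup F] [NormedSpace ℝ F]
    (L : (Fin N → ℝ) →L[ℝ] F) (u : Fin N → ℝ) :
    L u = ∑ j, u j • L (Pi.single j 1) := by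
  have h : u = ∑ j, u j • (Pi.single j 1 : Fin N → ℝ) := by
    funext i
    simp [Finset.sum_apply, Pi.single_apply]
  conv_lhs => rw [h]
  rw [map_sum]
  simp




lemma hl_alg {N : ℕ} (v w P : Fin N → ℝ) (q s t a : Fin N → Fin N → ℝ)
    (hsym : ∀ m j, q m j = q j m)
    (ht : ∀ m j, t m j = -∑ k, a j k * s m k) :
    (∑ m, ((v m : ℂ) - Complex.I * (w m : ℂ)) *
        (∑ j, (((v j : ℂ) + Complex.I * (w j : ℂ)) * (q m j : ℂ)
          + (P j : ℂ) * (Complex.I * (s m j : ℂ)))))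
      - ∑ j, (1 / 2 : ℂ) *
          ((∑ m, ((v m : ℂ) - Complex.I * (w m : ℂ)) * (Complex.I * (s m j : ℂ))
             - ∑ m, ((v m : ℂ) + Complex.I * (w m : ℂ)) * (-(Complex.I * (s m j : ℂ))))
           + Complex.I * ∑ k, (a j k : ℂ) *
              (∑ m, ((v m : ℂ) - Complex.I * (w m : ℂ)) * (Complex.I * (s m k : ℂ))
                - ∑ m, ((v m : ℂ) + Complex.I * (w m : ℂ)) * (-(Complex.I * (s m k : ℂ)))))
          * (P j : ℂ)
      = (((∑ j, v j * ∑ m, v m * q m j)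
          + (∑ j, w j * ∑ m, w m * q m j)
          + ∑ j, ((∑ m, w m * s m j) - ∑ m, v m * t m j) * P j : ℝ) : ℂ) := by
  -- simplify the bracket
  have hBr : ∀ j : Fin N,
      (∑ m, ((v m : ℂ) - Complex.I * (w m : ℂ)) * (Complex.I * (s m j : ℂ))
        - ∑ m, ((v m : ℂ) + Complex.I * (w m : ℂ)) * (-(Complex.I * (s m j : ℂ))))
      = 2 * Complex.I * ∑ m, (v m : ℂ) * (s m j : ℂ) := by
    intro j
    rw [← Finset.sum_sub_distrib, Finset.mul_sum]
    exact Finset.sum_congr rfl fun m _ => by ring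
  simp only [hBr]
  have hJB : ∀ j : Fin N,
      (∑ k, (a j k : ℂ) * (2 * Complex.I * ∑ m, (v m : ℂ) * (s m k : ℂ)))
        = 2 * Complex.I * ∑ k, (a j k : ℂ) * ∑ m, (v m : ℂ) * (s m k : ℂ) := by
    intro j; rw [Finset.mul_sum]; exact Finset.sum_congr rfl fun k _ => by ring
  simp only [hJB]
  have hB : ∀ j : Fin N,
      (1 / 2 : ℂ) * ((2 * Complex.I * ∑ m, (v m : ℂ) * (s m j : ℂ))
          + Complex.I * (2 * Complex.I * ∑ k, (a j k : ℂ) * ∑ m, (v m : ℂ) * (s m k : ℂ)))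
        * (P j : ℂ)
      = Complex.I * (∑ m, (v m : ℂ) * (s m j : ℂ)) * (P j : ℂ)
          - (∑ k, (a j k : ℂ) * ∑ m, (v m : ℂ) * (s m k : ℂ)) * (P j : ℂ) := by
    intro j
    linear_combination ((∑ k, (a j k : ℂ) * ∑ m, (v m : ℂ) * (s m k : ℂ)) * (P j : ℂ)) *
      Complex.I_sq
  simp only [hB]
  -- split the big product
  have hA' : (∑ m, ((v m : ℂ) - Complex.I * (w m : ℂ)) *
        (∑ j, (((v j : ℂ) + Complex.I * (w j : ℂ)) * (q m j : ℂ)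
          + (P j : ℂ) * (Complex.I * (s m j : ℂ)))))
      = (∑ m, ∑ j, (v m : ℂ) * (v j : ℂ) * (q m j : ℂ))
        + (∑ m, ∑ j, (w m : ℂ) * (w j : ℂ) * (q m j : ℂ))
        + ((∑ m, ∑ j, Complex.I * ((v m : ℂ) * (w j : ℂ) * (q m j : ℂ)))
            - ∑ m, ∑ j, Complex.I * ((w m : ℂ) * (v j : ℂ) * (q m j : ℂ)))
        + ∑ m, ∑ j, (Complex.I * (v m : ℂ) + (w m : ℂ)) * (P j : ℂ) * (s m j : ℂ) := by
    have step : ∀ m : Fin N, ((v m : ℂ) - Complex.I * (w m : ℂ)) *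
        (∑ j, (((v j : ℂ) + Complex.I * (w j : ℂ)) * (q m j : ℂ)
          + (P j : ℂ) * (Complex.I * (s m j : ℂ))))
        = ∑ j, ((v m : ℂ) * (v j : ℂ) * (q m j : ℂ)
            + (w m : ℂ) * (w j : ℂ) * (q m j : ℂ)
            + (Complex.I * ((v m : ℂ) * (w j : ℂ) * (q m j : ℂ))
                - Complex.I * ((w m : ℂ) * (v j : ℂ) * (q m j : ℂ)))
            + (Complex.I * (v m : ℂ) + (w m : ℂ)) * (P j : ℂ) * (s m j : ℂ)) := by
      intro m
      rw [Finset.mul_sum]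
      refine Finset.sum_congr rfl fun j _ => ?_
      linear_combination (-((w m : ℂ) * (w j : ℂ) * (q m j : ℂ)
        + (w m : ℂ) * (P j : ℂ) * (s m j : ℂ))) * Complex.I_sq
    rw [Finset.sum_congr rfl fun m _ => step m]
    simp only [Finset.sum_add_distrib, Finset.sum_sub_distrib]
  rw [hA']
  have h34 : (∑ m, ∑ j, Complex.I * ((v m : ℂ) * (w j : ℂ) * (q m j : ℂ)))
      = ∑ m, ∑ j, Complex.I * ((w m : ℂ) * (v j : ℂ) * (q m j : ℂ)) := by
    rw [Finset.sum_comm]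
    refine Finset.sum_congr rfl fun m _ => Finset.sum_congr rfl fun j _ => ?_
    rw [hsym j m]; ring
  have h1 : (∑ m, ∑ j, (v m : ℂ) * (v j : ℂ) * (q m j : ℂ))
      = ((∑ j, v j * ∑ m, v m * q m j : ℝ) : ℂ) := by
    push_cast
    rw [Finset.sum_comm]
    refine Finset.sum_congr rfl fun j _ => ?_
    rw [Finset.mul_sum]
    exact Finset.sum_congr rfl fun m _ => by ring
  have h2 : (∑ m, ∑ j, (w m : ℂ) * (w j : ℂ) * (q m j : ℂ))
      = ((∑ j, w j * ∑ m, w m * q m j : ℝ) : ℂ) := by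
    push_cast
    rw [Finset.sum_comm]
    refine Finset.sum_congr rfl fun j _ => ?_
    rw [Finset.mul_sum]
    exact Finset.sum_congr rfl fun m _ => by ring
  have htt : ∀ j, (∑ m, (v m : ℂ) * (t m j : ℂ))
      = -∑ k, (a j k : ℂ) * ∑ m, (v m : ℂ) * (s m k : ℂ) := by
    intro j
    have hre : (∑ m, v m * t m j) = -∑ k, a j k * ∑ m, v m * s m k := by
      simp only [ht, mul_neg, Finset.mul_sum, Finset.sum_neg_distrib]
      rw [Finset.sum_comm]
      congr 1
      refine Finset.sum_congr rfl fun k _ => ?_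
      refine Finset.sum_congr rfl fun m _ => by ring
    have := congrArg (fun r : ℝ => (r : ℂ)) hre
    push_cast at this
    exact this
  have h5B : (∑ m, ∑ j, (Complex.I * (v m : ℂ) + (w m : ℂ)) * (P j : ℂ) * (s m j : ℂ))
      - ∑ j, (Complex.I * (∑ m, (v m : ℂ) * (s m j : ℂ)) * (P j : ℂ)
          - (∑ k, (a j k : ℂ) * ∑ m, (v m : ℂ) * (s m k : ℂ)) * (P j : ℂ))
      = ((∑ j, ((∑ m, w m * s m j) - ∑ m, v m * t m j) * P j : ℝ) : ℂ) := by
    push_cast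
    rw [Finset.sum_comm, ← Finset.sum_sub_distrib]
    refine Finset.sum_congr rfl fun j _ => ?_
    have e : (∑ m, (Complex.I * (v m : ℂ) + (w m : ℂ)) * (P j : ℂ) * (s m j : ℂ))
        = Complex.I * (∑ m, (v m : ℂ) * (s m j : ℂ)) * (P j : ℂ)
          + (∑ m, (w m : ℂ) * (s m j : ℂ)) * (P j : ℂ) := by
      rw [show (∑ m, (Complex.I * (v m : ℂ) + (w m : ℂ)) * (P j : ℂ) * (s m j : ℂ))
          = ∑ m, (Complex.I * ((v m : ℂ) * (s m j : ℂ)) * (P j : ℂ)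
              + ((w m : ℂ) * (s m j : ℂ)) * (P j : ℂ)) from
        Finset.sum_congr rfl fun m _ => by ring]
      rw [Finset.sum_add_distrib, ← Finset.sum_mul, ← Finset.sum_mul, ← Finset.mul_sum,
        mul_assoc]

    rw [e, htt j]
    ring
  push_cast
  push_cast at h1 h2 h5B
  linear_combination h1 + h2 + h34 + h5B

set_option maxHeartbeats 2000000 in
theorem hl_key (N : ℕ) (Ω : Set (Fin N → ℝ)) (hΩ : IsOpen Ω)
    (J : (Fin N → ℝ) → Matrix (Fin N) (Fin N) ℝ)
    (hJsq : ∀ x ∈ Ω, J x * J x = -1)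
    (hJsmooth : ∀ j k, ContDiffOn ℝ (⊤ : ℕ∞) (fun y => J y j k) Ω)
    (f : (Fin N → ℝ) → ℝ) (hf : ContDiffOn ℝ (⊤ : ℕ∞) f Ω)
    (v : Fin N → ℝ) (x : Fin N → ℝ) (hx : x ∈ Ω) :
    ddbar N Ω J f v x
      = ((fderivWithin ℝ (fun y => fderivWithin ℝ f Ω y v) Ω x v
          + fderivWithin ℝ (fun y => fderivWithin ℝ f Ω y (applyJ N J x v)) Ω x
              (applyJ N J x v)
          + fderivWithin ℝ f Ω x (fun j =>
              fderivWithin ℝ (fun y => applyJ N J y v j) Ω x (applyJ N J x v)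
              - fderivWithin ℝ (fun y => applyJ N J y (applyJ N J x v) j) Ω x v)
          : ℝ) : ℂ) := by
  have uΩ : UniqueDiffOn ℝ Ω := hΩ.uniqueDiffOn
  have ux : UniqueDiffWithinAt ℝ Ω x := uΩ x hx
  set w : Fin N → ℝ := applyJ N J x v with hwdef
  -- basic differentiability
  have hJd : ∀ j k, DifferentiableWithinAt ℝ (fun y => J y j k) Ω x :=
    fun j k => ((hJsmooth j k).differentiableOn (by simp)) x hx
  have hJud : ∀ (u : Fin N → ℝ) (j : Fin N),
      DifferentiableWithinAt ℝ (fun y => applyJ N J y u j) Ω x := by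
    intro u j
    refine DifferentiableWithinAt.fun_sum fun k _ => (hJd j k).mul_const (u k)
  have hpd : ∀ j, DifferentiableWithinAt ℝ
      (fun y => fderivWithin ℝ f Ω y (Pi.single j 1)) Ω x := by
    intro j
    have h1 : ContDiffOn ℝ 1 (fderivWithin ℝ f Ω) Ω := hf.fderivWithin uΩ (WithTop.coe_le_coe.mpr le_top)
    exact ((h1.clm_apply contDiffOn_const).differentiableOn one_ne_zero) x hx
  -- derivative CLMs
  set S : Fin N → (Fin N → ℝ) →L[ℝ] ℝ :=
    (fun j => fderivWithin ℝ (fun y => applyJ N J y v j) Ω x) with hSdef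
  set Q : Fin N → (Fin N → ℝ) →L[ℝ] ℝ :=
    (fun j => fderivWithin ℝ (fun y => fderivWithin ℝ f Ω y (Pi.single j 1)) Ω x) with hQdef
  have hS : ∀ j, HasFDerivWithinAt (fun y => applyJ N J y v j) (S j) Ω x :=
    fun j => (hJud v j).hasFDerivWithinAt
  have hQ : ∀ j, HasFDerivWithinAt (fun y => fderivWithin ℝ f Ω y (Pi.single j 1)) (Q j) Ω x :=
    fun j => (hpd j).hasFDerivWithinAt
  have hSc : ∀ j, HasFDerivWithinAt (fun y => ((applyJ N J y v j : ℝ) : ℂ))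
      (Complex.ofRealCLM.comp (S j)) Ω x :=
    fun j => Complex.ofRealCLM.hasFDerivAt.comp_hasFDerivWithinAt x (hS j)
  have hQc : ∀ j, HasFDerivWithinAt (fun y => ((fderivWithin ℝ f Ω y (Pi.single j 1) : ℝ) : ℂ))
      (Complex.ofRealCLM.comp (Q j)) Ω x :=
    fun j => Complex.ofRealCLM.hasFDerivAt.comp_hasFDerivWithinAt x (hQ j)
  -- the (0,1) and (1,0) component fields
  have hW : ∀ j, HasFDerivWithinAt
      (fun y => (v j : ℂ) + Complex.I * ((applyJ N J y v j : ℝ) : ℂ))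
      (Complex.I • (Complex.ofRealCLM.comp (S j))) Ω x :=
    fun j => ((hSc j).const_mul Complex.I).const_add _
  have hV : ∀ j, HasFDerivWithinAt
      (fun y => (v j : ℂ) - Complex.I * ((applyJ N J y v j : ℝ) : ℂ))
      (-(Complex.I • (Complex.ofRealCLM.comp (S j)))) Ω x :=
    fun j => ((hSc j).const_mul Complex.I).const_sub _
  have hWf : ∀ j, fderivWithin ℝ
      (fun y => (v j : ℂ) + Complex.I * ((applyJ N J y v j : ℝ) : ℂ)) Ω x
      = Complex.I • (Complex.ofRealCLM.comp (S j)) := fun j => (hW j).fderivWithin ux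
  have hVf : ∀ j, fderivWithin ℝ
      (fun y => (v j : ℂ) - Complex.I * ((applyJ N J y v j : ℝ) : ℂ)) Ω x
      = -(Complex.I • (Complex.ofRealCLM.comp (S j))) := fun j => (hV j).fderivWithin ux
  -- the inner function of the first term
  have hg : HasFDerivWithinAt
      (fun y => ∑ j, ((v j : ℂ) + Complex.I * ((applyJ N J y v j : ℝ) : ℂ))
        * ((fderivWithin ℝ f Ω y (Pi.single j 1) : ℝ) : ℂ))
      (∑ j, (((v j : ℂ) + Complex.I * ((applyJ N J x v j : ℝ) : ℂ))
            • (Complex.ofRealCLM.comp (Q j))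
          + ((fderivWithin ℝ f Ω x (Pi.single j 1) : ℝ) : ℂ)
            • (Complex.I • (Complex.ofRealCLM.comp (S j))))) Ω x :=
    HasFDerivWithinAt.fun_sum fun j _ => (hW j).mul (hQc j)
  have hgf := hg.fderivWithin ux
  -- RHS term 1
  have e1 : ∀ u : Fin N → ℝ, (fun y => fderivWithin ℝ f Ω y u)
      = (fun y => ∑ j, u j * fderivWithin ℝ f Ω y (Pi.single j 1)) := by
    intro u
    funext y
    rw [clm_basis (fderivWithin ℝ f Ω y) u]
    simp [smul_eq_mul]
  have hTgen : ∀ u u' : Fin N → ℝ, fderivWithin ℝ (fun y => fderivWithin ℝ f Ω y u) Ω x u'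
      = ∑ j, u j * ∑ m, u' m * Q j (Pi.single m 1) := by
    intro u u'
    rw [e1 u]
    have hsum : HasFDerivWithinAt
        (fun y => ∑ j, u j * fderivWithin ℝ f Ω y (Pi.single j 1))
        (∑ j, u j • (Q j)) Ω x :=
      HasFDerivWithinAt.fun_sum fun j _ => (hQ j).const_mul (u j)
    rw [hsum.fderivWithin ux, ContinuousLinearMap.sum_apply]
    refine Finset.sum_congr rfl fun j _ => ?_
    rw [ContinuousLinearMap.smul_apply, smul_eq_mul, clm_basis (Q j) u']
    simp [smul_eq_mul]
  -- J² = -1 identity, differentiated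
  set A : Fin N → Fin N → (Fin N → ℝ) →L[ℝ] ℝ :=
    (fun j k => fderivWithin ℝ (fun y => J y j k) Ω x) with hAdef
  have hTw : ∀ j, HasFDerivWithinAt (fun y => applyJ N J y w j)
      (∑ k, w k • A j k) Ω x := by
    intro j
    refine HasFDerivWithinAt.fun_sum fun k _ => ?_
    exact (hJd j k).hasFDerivWithinAt.mul_const (w k)
  have hTwf : ∀ j, fderivWithin ℝ (fun y => applyJ N J y w j) Ω x
      = ∑ k, w k • A j k := fun j => (hTw j).fderivWithin ux
  have hJrel : ∀ m j : Fin N, fderivWithin ℝ (fun y => applyJ N J y w j) Ω x (Pi.single m 1)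
      = -∑ k, J x j k * S k (Pi.single m 1) := by
    intro m j
    -- the function  y ↦ ∑ k, J y j k * applyJ N J y v k  is constant (= -(v j)) on Ω
    have hconst : ∀ y ∈ Ω, (∑ k, J y j k * applyJ N J y v k) = -(v j) := by
      intro y hy
      have h2 : (J y * J y) = -1 := hJsq y hy
      have h3 : ∀ l, (∑ k, J y j k * J y k l) = -(if j = l then (1:ℝ) else 0) := by
        intro l
        have := congrArg (fun M : Matrix (Fin N) (Fin N) ℝ => M j l) h2
        simpa [Matrix.mul_apply, Matrix.one_apply] using this
      calc (∑ k, J y j k * applyJ N J y v k)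
          = ∑ k, ∑ l, J y j k * (J y k l * v l) := by
            refine Finset.sum_congr rfl fun k _ => ?_
            rw [show applyJ N J y v k = ∑ l, J y k l * v l from rfl, Finset.mul_sum]
        _ = ∑ l, (∑ k, J y j k * J y k l) * v l := by
            rw [Finset.sum_comm]
            refine Finset.sum_congr rfl fun l _ => ?_
            rw [Finset.sum_mul]
            refine Finset.sum_congr rfl fun k _ => by ring
        _ = ∑ l, (-(if j = l then (1:ℝ) else 0)) * v l := by
            refine Finset.sum_congr rfl fun l _ => by rw [h3 l]
        _ = -(v j) := by simp
    have hF : HasFDerivWithinAt (fun y => ∑ k, J y j k * applyJ N J y v k)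
        (∑ k, ((J x j k) • S k + (applyJ N J x v k) • A j k)) Ω x := by
      refine HasFDerivWithinAt.fun_sum fun k _ => ?_
      exact (hJd j k).hasFDerivWithinAt.mul (hS k)
    have hF0 : fderivWithin ℝ (fun y => ∑ k, J y j k * applyJ N J y v k) Ω x = 0 := by
      have : fderivWithin ℝ (fun y => ∑ k, J y j k * applyJ N J y v k) Ω x
          = fderivWithin ℝ (fun _ => -(v j)) Ω x := by
        apply Filter.EventuallyEq.fderivWithin_eq
        · exact Filter.eventuallyEq_of_mem (mem_nhdsWithin_of_mem_nhds (hΩ.mem_nhds hx)) hconst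
        · exact hconst x hx
      rw [this, fderivWithin_const_apply _]
    have hFeq : (∑ k, ((J x j k) • S k + (applyJ N J x v k) • A j k)) = 0 := by
      rw [← hF.fderivWithin ux, hF0]
    have := congrArg (fun L : (Fin N → ℝ) →L[ℝ] ℝ => L (Pi.single m 1)) hFeq
    simp only [ContinuousLinearMap.sum_apply, ContinuousLinearMap.add_apply,
      ContinuousLinearMap.smul_apply, smul_eq_mul, ContinuousLinearMap.zero_apply] at this
    rw [hTwf j]
    simp only [ContinuousLinearMap.sum_apply, ContinuousLinearMap.smul_apply, smul_eq_mul]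
    -- this : ∑ k, (J x j k * S k (e m) + w k * A j k (e m)) = 0
    have hsplit := this
    rw [Finset.sum_add_distrib] at hsplit
    have : (∑ k, w k * (A j k) (Pi.single m 1))
        = -∑ k, J x j k * S k (Pi.single m 1) := by
      rw [hwdef]
      linarith [hsplit]
    exact this
  -- symmetry of the Hessian
  have hsymm : IsSymmSndFDerivWithinAt ℝ f Ω x :=
    (hf x hx).isSymmSndFDerivWithinAt (by simp only [minSmoothness_of_isRCLikeNormedField]; exact WithTop.coe_le_coe.mpr le_top) uΩ
      (by rw [hΩ.interior_eq]; exact subset_closure hx) hx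
  have hd2 : DifferentiableWithinAt ℝ (fderivWithin ℝ f Ω) Ω x :=
    ((hf.fderivWithin (m := 1) uΩ (WithTop.coe_le_coe.mpr le_top)).differentiableOn one_ne_zero) x hx
  have hqsym : ∀ m j : Fin N, Q j (Pi.single m 1) = Q m (Pi.single j 1) := by
    have e : ∀ c d : Fin N → ℝ,
        fderivWithin ℝ (fun y => fderivWithin ℝ f Ω y c) Ω x d
          = fderivWithin ℝ (fderivWithin ℝ f Ω) Ω x d c := by
      intro c d
      rw [fderivWithin_clm_apply ux hd2 (differentiableWithinAt_const c)]
      simp [fderivWithin_const_apply _]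
    intro m j
    rw [hQdef]
    simp only
    rw [e, e]
    exact hsymm _ _
  -- expansions of directional derivatives in the basis
  have hSw : ∀ j : Fin N, fderivWithin ℝ (fun y => applyJ N J y v j) Ω x w
      = ∑ m, w m * S j (Pi.single m 1) := by
    intro j
    rw [clm_basis (fderivWithin ℝ (fun y => applyJ N J y v j) Ω x) w]
    simp only [smul_eq_mul, hSdef]
  have hTv : ∀ j : Fin N, fderivWithin ℝ (fun y => applyJ N J y w j) Ω x v
      = ∑ m, v m * fderivWithin ℝ (fun y => applyJ N J y w j) Ω x (Pi.single m 1) := by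
    intro j
    rw [clm_basis (fderivWithin ℝ (fun y => applyJ N J y w j) Ω x) v]
    simp only [smul_eq_mul]
  -- now unfold and assemble
  simp only [ddbar, cderivAlong, cdf, cbracket, vField, wField, applyJc]
  simp only [← hwdef]
  simp only [hgf, hWf, hVf]
  simp only [ContinuousLinearMap.sum_apply, ContinuousLinearMap.add_apply,
    ContinuousLinearMap.smul_apply, ContinuousLinearMap.comp_apply,
    ContinuousLinearMap.neg_apply, Complex.ofRealCLM_apply, smul_eq_mul]
  rw [hTgen v v, hTgen w w,
    clm_basis (fderivWithin ℝ f Ω x) (fun j =>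
      fderivWithin ℝ (fun y => applyJ N J y v j) Ω x w
        - fderivWithin ℝ (fun y => applyJ N J y w j) Ω x v)]
  simp only [hSw, hTv, smul_eq_mul]
  exact hl_alg v w (fun j => fderivWithin ℝ f Ω x (Pi.single j 1))
    (fun m j => Q j (Pi.single m 1)) (fun m j => S j (Pi.single m 1))
    (fun m j => fderivWithin ℝ (fun y => applyJ N J y w j) Ω x (Pi.single m 1))
    (fun j k => J x j k) hqsym hJrel

/-- Harvey–Lawson.  Let `J` be an almost complex structure on an open
set `Ω ⊆ ℝ^{2n}`, `v` a constant-coefficient vector field, and `f : Ω → ℝ` smooth.  Then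
`∂∂̄f(v - iJv, v + iJv) = D²f(v,v) + D²f(Jv,Jv) + Df(D_{Jv}J(v) - D_v J(Jv))`. -/
theorem harvey_lawson_formula (n : ℕ) (Ω : Set (Fin (2 * n) → ℝ)) (hΩ : IsOpen Ω)
    (J : (Fin (2 * n) → ℝ) → Matrix (Fin (2 * n)) (Fin (2 * n)) ℝ)
    (hJsq : ∀ x ∈ Ω, J x * J x = -1)
    (hJsmooth : ∀ j k, ContDiffOn ℝ (⊤ : ℕ∞) (fun y => J y j k) Ω)
    (f : (Fin (2 * n) → ℝ) → ℝ) (hf : ContDiffOn ℝ (⊤ : ℕ∞) f Ω)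
    (v : Fin (2 * n) → ℝ) (x : Fin (2 * n) → ℝ) (hx : x ∈ Ω) :
    ddbar (2 * n) Ω J f v x
      = ((fderivWithin ℝ (fun y => fderivWithin ℝ f Ω y v) Ω x v
          + fderivWithin ℝ (fun y => fderivWithin ℝ f Ω y (applyJ (2 * n) J x v)) Ω x
              (applyJ (2 * n) J x v)
          + fderivWithin ℝ f Ω x (fun j =>
              fderivWithin ℝ (fun y => applyJ (2 * n) J y v j) Ω x (applyJ (2 * n) J x v)
              - fderivWithin ℝ (fun y => applyJ (2 * n) J y (applyJ (2 * n) J x v) j) Ω x v)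
          : ℝ) : ℂ) :=
  hl_key (2 * n) Ω hΩ J hJsq hJsmooth f hf v x hx

end
end

section
/- Let $(M,d)$, $\mu$, and $W \subset M$ closed be as follows: $K_1, K_2$ are measurable kernels with $|K_1(x,y)| \le C_1 e^{-c d(x,y)}$ and $|K_2(x,y)| \le C_2 e^{-c(d(x,y) + d(x,W) + d(y,W))}$, and $\sup_x \int_M e^{-\frac{c}{2}d(x,z)} d\mu(z) \le V < \infty$. Then the composition $K(x,y) = \int K_1(x,z)K_2(z,y) d\mu(z)$ satisfies $|K(x,y)| \le C_1 C_2 V\, e^{-\frac{c}{4}(d(x,y) + d(x,W) + d(y,W))}$. -/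
/-!
The triangle inequalities `d(x,y) ≤ d(x,z) + d(z,y)` and `d(x,W) ≤ d(z,W) + d(x,z)` give
`|K₁(x,z) K₂(z,y)| ≤ C₁ C₂ e^{-(c/4)(d(x,y) + d(x,W) + d(y,W))} e^{-(c/2) d(x,z)}`,
and the last factor integrates in `z` to at most `V`.
-/

open MeasureTheory Metric

section

variable {α E : Type*} [MeasurableSpace α] {μ : Measure α} [NormedAddCommGroup E]
  {f : α → E} {g : α → ℝ} {A V : ℝ}

theorem lintegral_ofReal_norm_le_of_norm_le_mul (hA : 0 ≤ A) (hfg : ∀ z, ‖f z‖ ≤ A * g z)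
    (hg : ∫⁻ z, ENNReal.ofReal (g z) ∂μ ≤ ENNReal.ofReal V) :
    ∫⁻ z, ENNReal.ofReal ‖f z‖ ∂μ ≤ ENNReal.ofReal (A * V) :=
  calc ∫⁻ z, ENNReal.ofReal ‖f z‖ ∂μ ≤ ∫⁻ z, ENNReal.ofReal A * ENNReal.ofReal (g z) ∂μ :=
        lintegral_mono fun z => by
          rw [← ENNReal.ofReal_mul hA]
          exact ENNReal.ofReal_le_ofReal (hfg z)
    _ = ENNReal.ofReal A * ∫⁻ z, ENNReal.ofReal (g z) ∂μ :=
        lintegral_const_mul' _ _ ENNReal.ofReal_ne_top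
    _ ≤ ENNReal.ofReal A * ENNReal.ofReal V := by gcongr
    _ = ENNReal.ofReal (A * V) := (ENNReal.ofReal_mul hA).symm

theorem integrable_and_norm_integral_le_of_norm_le_mul [NormedSpace ℝ E] (hA : 0 ≤ A) (hV : 0 ≤ V)
    (hf : AEStronglyMeasurable f μ) (hfg : ∀ z, ‖f z‖ ≤ A * g z)
    (hg : ∫⁻ z, ENNReal.ofReal (g z) ∂μ ≤ ENNReal.ofReal V) :
    Integrable f μ ∧ ‖∫ z, f z ∂μ‖ ≤ A * V := by
  have hlin := lintegral_ofReal_norm_le_of_norm_le_mul hA hfg hg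
  refine ⟨⟨hf, ?_⟩, ?_⟩
  · rw [hasFiniteIntegral_iff_norm]
    exact hlin.trans_lt ENNReal.ofReal_lt_top
  · calc ‖∫ z, f z ∂μ‖ ≤ (∫⁻ z, ENNReal.ofReal ‖f z‖ ∂μ).toReal :=
          norm_integral_le_lintegral_norm f
      _ ≤ (ENNReal.ofReal (A * V)).toReal := ENNReal.toReal_mono ENNReal.ofReal_ne_top hlin
      _ = A * V := ENNReal.toReal_ofReal (mul_nonneg hA hV)

end

theorem dist_add_infDist_add_infDist_div_four_le {M : Type*} [MetricSpace M] (W : Set M)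
    (x y z : M) :
    (dist x y + infDist x W + infDist y W) / 4 + dist x z / 2 ≤
      dist x z + (dist z y + infDist z W + infDist y W) := by
  have hxy := dist_triangle x z y
  have hxW : infDist x W ≤ infDist z W + dist x z := infDist_le_infDist_add_dist
  linarith [dist_nonneg (x := z) (y := y), infDist_nonneg (x := z) (s := W),
    infDist_nonneg (x := y) (s := W)]

theorem exp_mul_exp_le_exp_infDist_mul_exp {M : Type*} [MetricSpace M] {c : ℝ} (hc : 0 ≤ c)
    (W : Set M) (x y z : M) :
    Real.exp (-c * dist x z) * Real.exp (-c * (dist z y + infDist z W + infDist y W)) ≤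
      Real.exp (-(c / 4) * (dist x y + infDist x W + infDist y W)) *
        Real.exp (-(c / 2) * dist x z) := by
  rw [← Real.exp_add, ← Real.exp_add, Real.exp_le_exp]
  linarith [mul_le_mul_of_nonneg_left (dist_add_infDist_add_infDist_div_four_le W x y z) hc]

theorem kernel_composition_exp_decay_near_set_general
    {M : Type*} [MetricSpace M] [MeasurableSpace M]
    (μ : Measure M) (W : Set M)
    (K₁ K₂ : M → M → ℂ) (C₁ C₂ c V : ℝ)
    (hc : 0 < c) (hV : 0 ≤ V)
    (hK₁m : Measurable (Function.uncurry K₁)) (hK₂m : Measurable (Function.uncurry K₂))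
    (hK₁ : ∀ x y, ‖K₁ x y‖ ≤ C₁ * Real.exp (-c * dist x y))
    (hK₂ : ∀ x y, ‖K₂ x y‖ ≤
      C₂ * Real.exp (-c * (dist x y + Metric.infDist x W + Metric.infDist y W)))
    (hint : ∀ x : M,
      ∫⁻ z, ENNReal.ofReal (Real.exp (-(c / 2) * dist x z)) ∂μ ≤ ENNReal.ofReal V) :
    ∀ x y : M, Integrable (fun z => K₁ x z * K₂ z y) μ ∧
      ‖∫ z, K₁ x z * K₂ z y ∂μ‖ ≤ C₁ * C₂ * V *
        Real.exp (-(c / 4) * (dist x y + Metric.infDist x W + Metric.infDist y W)) := by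
  intro x y
  have hC₁ : 0 ≤ C₁ :=
    nonneg_of_mul_nonneg_left ((norm_nonneg _).trans (hK₁ x x)) (Real.exp_pos _)
  have hC₂ : 0 ≤ C₂ :=
    nonneg_of_mul_nonneg_left ((norm_nonneg _).trans (hK₂ x x)) (Real.exp_pos _)
  have hmeas : Measurable fun z => K₁ x z * K₂ z y :=
    (hK₁m.comp measurable_prodMk_left).mul (hK₂m.comp measurable_prodMk_right)
  have hpt (z : M) : ‖K₁ x z * K₂ z y‖ ≤
      C₁ * C₂ * Real.exp (-(c / 4) * (dist x y + infDist x W + infDist y W)) *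
        Real.exp (-(c / 2) * dist x z) :=
    calc ‖K₁ x z * K₂ z y‖
        ≤ C₁ * Real.exp (-c * dist x z) *
            (C₂ * Real.exp (-c * (dist z y + infDist z W + infDist y W))) := by
          rw [norm_mul]
          exact mul_le_mul (hK₁ x z) (hK₂ z y) (norm_nonneg _) (by positivity)
      _ ≤ _ := by
          rw [mul_mul_mul_comm, mul_assoc (C₁ * C₂)]
          exact mul_le_mul_of_nonneg_left (exp_mul_exp_le_exp_infDist_mul_exp hc.le W x y z)
            (mul_nonneg hC₁ hC₂)
  rw [mul_right_comm]
  exact integrable_and_norm_integral_le_of_norm_le_mul (by positivity) hV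
    hmeas.aestronglyMeasurable hpt (hint x)

/-- Composition of kernels with exponential decay away from a closed
set `W`.  If `‖K₁(x,y)‖ ≤ C₁ e^{-c d(x,y)}`,
`‖K₂(x,y)‖ ≤ C₂ e^{-c (d(x,y) + d(x,W) + d(y,W))}`, and
`∫ e^{-(c/2) d(x,z)} dμ(z) ≤ V` uniformly in `x`, then
`K(x,y) = ∫ K₁(x,z) K₂(z,y) dμ(z)` satisfies
`‖K(x,y)‖ ≤ C₁ C₂ V e^{-(c/4)(d(x,y) + d(x,W) + d(y,W))}`. -/
theorem kernel_composition_exp_decay_near_set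
    {M : Type*} [MetricSpace M] [MeasurableSpace M] [OpensMeasurableSpace M]
    (μ : Measure M) (W : Set M) (hW : W.Nonempty) (hWc : IsClosed W)
    (K₁ K₂ : M → M → ℂ) (C₁ C₂ c V : ℝ)
    (hC₁ : 0 < C₁) (hC₂ : 0 < C₂) (hc : 0 < c) (hV : 0 ≤ V)
    (hK₁m : Measurable (Function.uncurry K₁)) (hK₂m : Measurable (Function.uncurry K₂))
    (hK₁ : ∀ x y, ‖K₁ x y‖ ≤ C₁ * Real.exp (-c * dist x y))
    (hK₂ : ∀ x y, ‖K₂ x y‖ ≤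
      C₂ * Real.exp (-c * (dist x y + Metric.infDist x W + Metric.infDist y W)))
    (hint : ∀ x : M,
      ∫⁻ z, ENNReal.ofReal (Real.exp (-(c / 2) * dist x z)) ∂μ ≤ ENNReal.ofReal V) :
    ∀ x y : M, Integrable (fun z => K₁ x z * K₂ z y) μ ∧
      ‖∫ z, K₁ x z * K₂ z y ∂μ‖ ≤ C₁ * C₂ * V *
        Real.exp (-(c / 4) * (dist x y + Metric.infDist x W + Metric.infDist y W)) :=
  kernel_composition_exp_decay_near_set_general μ W K₁ K₂ C₁ C₂ c V hc hV hK₁m hK₂m hK₁ hK₂ hint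
end
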